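/- arXiv:1806.03599 — 2 statements merged into one kernel-verified Lean document; each statement's English description precedes it below -/
import Mathlib

section
/- Let R be a commutative Artinian ring with exactly n maximal ideals. Then R has exactly 2^n idempotents. -/
/-!
Idempotents of a commutative ring correspond to clopen subsets of its prime spectrum. For an
Artinian ring every prime is maximal and the spectrum is finite and discrete, so every subset of
it is clopen, and the idempotents correspond to the subsets of the set of maximal ideals.
-/

open TopologicalSpace

theorem Nat.card_set {α : Type*} [Finite α] : Nat.card (Set α) = 2 ^ Nat.card α := by
  have := Fintype.ofFinite α
  rw [Nat.card_eq_fintype_card, Nat.card_eq_fintype_card, Fintype.card_set]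

def TopologicalSpace.Clopens.equivSetOfDiscrete (X : Type*) [TopologicalSpace X]
    [DiscreteTopology X] : Clopens X ≃ Set X where
  toFun s := s
  invFun s := ⟨s, isClopen_discrete s⟩
  left_inv _ := rfl
  right_inv _ := rfl

theorem IsArtinianRing.card_primeSpectrum (R : Type*) [CommRing R] [IsArtinianRing R] :
    Nat.card (PrimeSpectrum R) = Nat.card {I : Ideal R // I.IsMaximal} :=
  Nat.card_congr <|
    IsArtinianRing.primeSpectrumEquivMaximalSpectrum.trans (MaximalSpectrum.equivSubtype R)

theorem IsArtinianRing.card_isIdempotentElem (R : Type*) [CommRing R] [IsArtinianRing R] :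
    Nat.card {e : R // IsIdempotentElem e} = 2 ^ Nat.card {I : Ideal R // I.IsMaximal} := by
  rw [← IsArtinianRing.card_primeSpectrum, ← Nat.card_set]
  exact Nat.card_congr <|
    PrimeSpectrum.isIdempotentElemEquivClopens.toEquiv.trans (Clopens.equivSetOfDiscrete _)

theorem artinian_card_idempotents (R : Type*) [CommRing R] [IsArtinianRing R] (n : ℕ)
    (hn : Nat.card {I : Ideal R // I.IsMaximal} = n) :
    Nat.card {e : R // IsIdempotentElem e} = 2 ^ n := by
  rw [IsArtinianRing.card_isIdempotentElem, hn]
end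

section
/- Let R be a commutative Artinian ring with distinct maximal ideals m_1, ..., m_n, and N with J^N = 0 where J is the Jacobson radical. Then f ∈ R is idempotent if and only if f = Σ_{k=1}^n h_k ε_k for some ε_k ∈ {0,1}, where h_k ∈ ∏_{i≠k} m_i^N and h_k - 1 ∈ m_k^N. -/
/-!
Modulo `m_k ^ N` an idempotent is congruent to `0` or `1`, since `f (1 - f) = 0` puts `f` or
`1 - f` into the prime `m_k` and idempotents equal their powers. By the Chinese remainder theorem
the `h_k` reduce to the standard basis of `∏ R ⧸ m_i ^ N`, so `∑ h_k ε_k` is congruent to `ε_k`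
modulo each `m_k ^ N`. Finally two elements that agree modulo every `m_k ^ N` are equal, because
`⨅ m_k ^ N = ∏ m_k ^ N ≤ J ^ N = 0`.
-/

open Finset Function

section

variable {R : Type*} [CommRing R]

namespace IsIdempotentElem

variable {e : R}

lemma mem_pow_of_mem {I : Ideal R} (he : IsIdempotentElem e) (h : e ∈ I) :
    ∀ N : ℕ, e ∈ I ^ N
  | 0 => by simp
  | N + 1 => he.pow_succ_eq N ▸ Ideal.pow_mem_pow h _

lemma sub_ite_mem_pow {P : Ideal R} [P.IsPrime] [Decidable (e ∈ P)] (he : IsIdempotentElem e)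
    (N : ℕ) : e - (if e ∈ P then 0 else 1) ∈ P ^ N := by
  split_ifs with heP
  · simpa using he.mem_pow_of_mem heP N
  · have hmul : e * (1 - e) ∈ P := by rw [mul_sub, mul_one, he.eq, sub_self]; exact P.zero_mem
    have h1e : 1 - e ∈ P := (Ideal.IsPrime.mem_or_mem ‹_› hmul).resolve_left heP
    simpa using neg_mem (he.one_sub.mem_pow_of_mem h1e N)

lemma mul_self_sub_mem_of_sub_mem {I : Ideal R} {x : R} (he : IsIdempotentElem e)
    (hx : x - e ∈ I) : x * x - x ∈ I := by
  rw [← Ideal.Quotient.mk_eq_mk_iff_sub_mem] at hx ⊢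
  rw [map_mul, hx, ← map_mul, he.eq]

end IsIdempotentElem

namespace Ideal

lemma mem_of_mem_prod_erase {ι : Type*} [DecidableEq ι] {s : Finset ι} {I : ι → Ideal R}
    {x : R} {j k : ι} (hx : x ∈ ∏ i ∈ s.erase j, I i) (hk : k ∈ s) (hjk : j ≠ k) : x ∈ I k :=
  prod_le_inf.trans (Finset.inf_le (mem_erase.2 ⟨hjk.symm, hk⟩)) hx

lemma sum_mul_sub_mem {ι : Type*} [Fintype ι] {I : Ideal R} {h ε : ι → R} {k : ι}
    (hk : h k - 1 ∈ I) (hj : ∀ j, j ≠ k → h j ∈ I) : ∑ j, h j * ε j - ε k ∈ I := by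
  rw [← Quotient.mk_eq_mk_iff_sub_mem, map_sum,
    Finset.sum_eq_single k (fun j _ hjk => by rw [map_mul, Quotient.eq_zero_iff_mem.2 (hj j hjk),
      zero_mul]) (by simp), map_mul, (Quotient.mk_eq_mk_iff_sub_mem _ _).2 hk, map_one, one_mul]

lemma exists_mem_prod_erase_sub_one_mem {ι : Type*} [Fintype ι] [DecidableEq ι]
    {I : ι → Ideal R} (hI : Pairwise (IsCoprime on I)) (k : ι) :
    ∃ h, h ∈ ∏ i ∈ univ.erase k, I i ∧ h - 1 ∈ I k := by
  obtain ⟨h, hh⟩ := exists_forall_sub_mem_ideal hI fun i => if i = k then 1 else 0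
  refine ⟨h, ?_, by simpa using hh k⟩
  rw [prod_eq_iInf_of_pairwise_isCoprime fun i _ j _ hij => hI hij]
  simp only [Submodule.mem_iInf]
  intro i hi
  simpa [ne_of_mem_erase hi] using hh i

lemma pairwise_isCoprime_pow {ι : Type*} {m : ι → Ideal R} (hmax : ∀ i, (m i).IsMaximal)
    (hinj : Injective m) (N : ℕ) : Pairwise (IsCoprime on fun i => m i ^ N) :=
  fun i j hij =>
    (isCoprime_iff_sup_eq.2 ((hmax i).coprime_of_ne (hmax j) (hinj.ne hij))).pow

lemma iInf_le_jacobson_bot {ι : Type*} {m : ι → Ideal R}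
    (hall : ∀ I : Ideal R, I.IsMaximal → ∃ i, I = m i) : ⨅ i, m i ≤ (⊥ : Ideal R).jacobson := by
  refine le_sInf ?_
  rintro I ⟨-, hI⟩
  obtain ⟨i, rfl⟩ := hall I hI
  exact iInf_le m i

lemma iInf_pow_eq_bot {ι : Type*} [Fintype ι] {m : ι → Ideal R} {J : Ideal R} {N : ℕ}
    (hcop : Pairwise (IsCoprime on fun i => m i ^ N)) (hle : ⨅ i, m i ≤ J) (hN : J ^ N = ⊥) :
    ⨅ i, m i ^ N = ⊥ := by
  classical
  refine eq_bot_iff.2 ?_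
  calc ⨅ i, m i ^ N = ∏ i, m i ^ N := by
        simpa using
          (prod_eq_iInf_of_pairwise_isCoprime (s := univ) fun i _ j _ hij => hcop hij).symm
    _ = (∏ i, m i) ^ N := prod_pow _ _ _
    _ ≤ J ^ N := pow_right_mono
        ((le_iInf fun i => prod_le_inf.trans (Finset.inf_le (mem_univ i))).trans hle) N
    _ = ⊥ := hN

lemma eq_of_forall_sub_mem {ι : Type*} {I : ι → Ideal R} (hI : ⨅ i, I i = ⊥) {x y : R}
    (h : ∀ i, x - y ∈ I i) : x = y := by
  have hmem : x - y ∈ ⨅ i, I i := Submodule.mem_iInf _ |>.2 h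
  rwa [hI, Submodule.mem_bot, sub_eq_zero] at hmem

end Ideal

end

theorem artinian_idempotent_iff_general (R : Type*) [CommRing R] (n : ℕ)
    (m : Fin n → Ideal R) (hmax : ∀ i, (m i).IsMaximal) (hinj : Function.Injective m)
    (hall : ∀ I : Ideal R, I.IsMaximal → ∃ i, I = m i)
    (N : ℕ) (hN : (⊥ : Ideal R).jacobson ^ N = ⊥) (f : R) :
    IsIdempotentElem f ↔
      ∃ ε h : Fin n → R,
        (∀ k, ε k = 0 ∨ ε k = 1) ∧
        (∀ k, h k ∈ ∏ i ∈ Finset.univ.erase k, (m i) ^ N ∧ h k - 1 ∈ (m k) ^ N) ∧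
        f = ∑ k, h k * ε k := by
  classical
  have hcop := Ideal.pairwise_isCoprime_pow hmax hinj N
  have hsep : ∀ x y : R, (∀ k, x - y ∈ m k ^ N) → x = y := fun x y =>
    Ideal.eq_of_forall_sub_mem (Ideal.iInf_pow_eq_bot hcop (Ideal.iInf_le_jacobson_bot hall) hN)
  constructor
  · intro hf
    choose h hh using Ideal.exists_mem_prod_erase_sub_one_mem hcop
    refine ⟨fun k => if f ∈ m k then 0 else 1, h, fun k => by beta_reduce; split_ifs <;> simp, hh,
      hsep _ _ fun k => ?_⟩
    have hsum := Ideal.sum_mul_sub_mem (ε := fun k => if f ∈ m k then 0 else 1) (hh k).2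
      fun j hjk => Ideal.mem_of_mem_prod_erase (I := (m · ^ N)) (hh j).1 (mem_univ k) hjk
    simpa only [sub_sub_sub_cancel_right] using sub_mem (hf.sub_ite_mem_pow N) hsum
  · rintro ⟨ε, h, hε, hh, rfl⟩
    have hεk : ∀ k, IsIdempotentElem (ε k) := fun k => (hε k).elim (· ▸ .zero) (· ▸ .one)
    refine hsep _ _ fun k => (hεk k).mul_self_sub_mem_of_sub_mem ?_
    exact Ideal.sum_mul_sub_mem (hh k).2
      fun j hjk => Ideal.mem_of_mem_prod_erase (I := (m · ^ N)) (hh j).1 (mem_univ k) hjk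

theorem artinian_idempotent_iff (R : Type*) [CommRing R] [IsArtinianRing R] (n : ℕ)
    (m : Fin n → Ideal R) (hmax : ∀ i, (m i).IsMaximal) (hinj : Function.Injective m)
    (hall : ∀ I : Ideal R, I.IsMaximal → ∃ i, I = m i)
    (N : ℕ) (hN : (⊥ : Ideal R).jacobson ^ N = ⊥) (f : R) :
    IsIdempotentElem f ↔
      ∃ ε h : Fin n → R,
        (∀ k, ε k = 0 ∨ ε k = 1) ∧
        (∀ k, h k ∈ ∏ i ∈ Finset.univ.erase k, (m i) ^ N ∧ h k - 1 ∈ (m k) ^ N) ∧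
        f = ∑ k, h k * ε k :=
  artinian_idempotent_iff_general R n m hmax hinj hall N hN f
end
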